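/- arXiv:math-ph/0311039 — 2 statements merged into one kernel-verified Lean document; each statement's English description precedes it below -/
import Mathlib

section
/- (Equivalence of the harmonic oscillator potential V = x² + i·γ̂ to the free equation via T = −e^(−4t).) Let γ ≠ 0 be a real constant, γ̂ = (4−γ)/γ, and let ψ be a smooth solution of NLS(γ, V) on ℝ×ℝ, where V(t,x) = x² + i·γ̂. Then the function φ, defined for s < 0 and y ∈ ℝ by φ(s,y) = (−4·s)^(−1/γ) · ψ( −(1/4)·ln(−s), y/(2·√(−s)) ) · exp( i·y²/(8·s) ), is a smooth solution of NLS(γ, 0) on (−∞,0)×ℝ, i.e. of the free equation i·φ_s + φ_yy + |φ|^γ·φ = 0 there. -/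
/-- `ψ` is a smooth solution of the nonlinear Schrödinger equation
`i ψ_t + ψ_xx + |ψ|^γ ψ + V ψ = 0` on the set `Ω ⊆ ℝ × ℝ`. -/
def SolvesNLS (γ : ℝ) (V : ℝ → ℝ → ℂ) (ψ : ℝ → ℝ → ℂ) (Ω : Set (ℝ × ℝ)) : Prop :=
  ContDiffOn ℝ (⊤ : ℕ∞) (fun p : ℝ × ℝ => ψ p.1 p.2) Ω ∧
  ∀ p ∈ Ω,
    Complex.I * deriv (fun t => ψ t p.2) p.1
      + deriv (deriv (fun x => ψ p.1 x)) p.2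
      + (((‖ψ p.1 p.2‖) ^ γ : ℝ) : ℂ) * ψ p.1 p.2
      + V p.1 p.2 * ψ p.1 p.2 = 0

private lemma HasDerivAt.congr_value {f : ℝ → ℂ} {a b : ℂ} {x : ℝ}
    (h : HasDerivAt f a x) (hab : a = b) : HasDerivAt f b x := hab ▸ h

private lemma fderiv_pair_eq {F : ℝ × ℝ → ℂ} {p : ℝ × ℝ} (hF : DifferentiableAt ℝ F p)
    (a b : ℝ) :
    fderiv ℝ F p (a, b) = a • fderiv ℝ F p (1, 0) + b • fderiv ℝ F p (0, 1) := by
  have h : ((a, b) : ℝ × ℝ) = a • ((1 : ℝ), (0 : ℝ)) + b • ((0 : ℝ), (1 : ℝ)) := by simp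
  rw [h, map_add, map_smul, map_smul]

private lemma hasDerivAt_comp_curve {F : ℝ × ℝ → ℂ} (hF : Differentiable ℝ F)
    {u v : ℝ → ℝ} {u' v' s : ℝ} (hu : HasDerivAt u u' s) (hv : HasDerivAt v v' s) :
    HasDerivAt (fun σ => F (u σ, v σ))
      (u' • fderiv ℝ F (u s, v s) (1, 0) + v' • fderiv ℝ F (u s, v s) (0, 1)) s := by
  have h := (hF (u s, v s)).hasFDerivAt.comp_hasDerivAt s (hu.prodMk hv)
  rw [← fderiv_pair_eq (hF _)]
  exact h


private lemma alg_key (γ s r y : ℝ) (M : ℝ) (A u ut ux uxx E : ℂ)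
    (hγ : γ ≠ 0) (hr : r ≠ 0) (hs2 : s = -(r ^ 2))
    (hPDE : Complex.I * ut + uxx + ((M : ℝ) : ℂ) * u
      + (((y / (2 * r) : ℝ) : ℂ) ^ 2 + Complex.I * (((4 - γ) / γ : ℝ) : ℂ)) * u = 0) :
    Complex.I * (A * (((-1 / (γ * s) : ℝ) : ℂ) * u + ((-1 / (4 * s) : ℝ) : ℂ) * ut
        + ((y / (4 * r ^ 3) : ℝ) : ℂ) * ux) * E
      + A * u * E * (Complex.I * ((-(y ^ 2) / (8 * s ^ 2) : ℝ) : ℂ)))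
    + A * E * (((1 / (4 * r ^ 2) : ℝ) : ℂ) * uxx
        + Complex.I * ((y / (4 * s * r) : ℝ) : ℂ) * ux
        + (Complex.I * ((y / (4 * s) : ℝ) : ℂ)) * (Complex.I * ((y / (4 * s) : ℝ) : ℂ)) * u
        + Complex.I * ((1 / (4 * s) : ℝ) : ℂ) * u)
    + (((-4 * s)⁻¹ * M : ℝ) : ℂ) * (A * u * E)
    + 0 * (A * u * E) = 0 := by
  subst hs2
  have huxx : uxx = -(Complex.I * ut) - ((M : ℝ) : ℂ) * u
      - (((y / (2 * r) : ℝ) : ℂ) ^ 2 + Complex.I * (((4 - γ) / γ : ℝ) : ℂ)) * u := by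
    linear_combination hPDE
  rw [huxx]
  have hγC : (γ : ℂ) ≠ 0 := Complex.ofReal_ne_zero.mpr hγ
  have hrC : (r : ℂ) ≠ 0 := Complex.ofReal_ne_zero.mpr hr
  push_cast
  linear_combination (-(A * u * E * (y:ℂ) ^ 2 / (16 * (r:ℂ) ^ 4))) * Complex.I_sq
    + (Complex.I * A * u * E / (4 * (r:ℂ) ^ 2)) * (mul_inv_cancel₀ hγC)

set_option maxHeartbeats 2000000 in
/-- equivalence of the harmonic oscillator potential `x² + iγ̂`
to the free equation via `T = -e^{-4t}`. -/
theorem stmt_12 (γ : ℝ) (hγ : γ ≠ 0) (ψ : ℝ → ℝ → ℂ)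
    (hψ : SolvesNLS γ (fun _ x => ((x : ℂ)) ^ 2 + Complex.I * (((4 - γ) / γ : ℝ) : ℂ)) ψ
      Set.univ) :
    SolvesNLS γ (fun _ _ => 0)
      (fun s y => (((-4 * s) ^ (-1 / γ) : ℝ) : ℂ) *
        ψ (-(1 / 4) * Real.log (-s)) (y / (2 * Real.sqrt (-s))) *
        Complex.exp (Complex.I * ((y ^ 2 / (8 * s) : ℝ) : ℂ)))
      {p : ℝ × ℝ | p.1 < 0} := by
  obtain ⟨hψs, hψe⟩ := hψ
  have hF : ContDiff ℝ (⊤ : ℕ∞) (fun p : ℝ × ℝ => ψ p.1 p.2) := contDiffOn_univ.mp hψs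
  set Fψ : ℝ × ℝ → ℂ := fun p : ℝ × ℝ => ψ p.1 p.2 with hFψdef
  set Fx : ℝ × ℝ → ℂ := fun p : ℝ × ℝ => fderiv ℝ Fψ p (0, 1) with hFxdef
  have hFx : ContDiff ℝ (⊤ : ℕ∞) Fx := (hF.fderiv_right (by simp)).clm_apply contDiff_const
  have hFd : Differentiable ℝ Fψ := hF.differentiable (by simp)
  have hFxd : Differentiable ℝ Fx := hFx.differentiable (by simp)
  -- partial derivatives of ψ
  have hψt : ∀ t x : ℝ, HasDerivAt (fun t' => ψ t' x) (fderiv ℝ Fψ (t, x) (1, 0)) t := by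
    intro t x
    have h := hasDerivAt_comp_curve hFd (hasDerivAt_id t) (hasDerivAt_const t x)
    simpa using h
  have hψx : ∀ t x : ℝ, HasDerivAt (fun x' => ψ t x') (Fx (t, x)) x := by
    intro t x
    have h := hasDerivAt_comp_curve hFd (hasDerivAt_const x t) (hasDerivAt_id x)
    simpa [hFxdef] using h
  have hψxx : ∀ t x : ℝ, HasDerivAt (fun x' => Fx (t, x')) (fderiv ℝ Fx (t, x) (0, 1)) x := by
    intro t x
    have h := hasDerivAt_comp_curve hFxd (hasDerivAt_const x t) (hasDerivAt_id x)
    simpa using h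
  have heq : ∀ t x : ℝ,
      Complex.I * fderiv ℝ Fψ (t, x) (1, 0) + fderiv ℝ Fx (t, x) (0, 1)
        + (((‖ψ t x‖) ^ γ : ℝ) : ℂ) * ψ t x
        + (((x : ℂ)) ^ 2 + Complex.I * (((4 - γ) / γ : ℝ) : ℂ)) * ψ t x = 0 := by
    intro t x
    have h := hψe (t, x) (Set.mem_univ _)
    simp only at h
    rw [(hψt t x).deriv] at h
    have hd1 : deriv (fun x' => ψ t x') = fun x' => Fx (t, x') :=
      funext fun z => (hψx t z).deriv
    rw [hd1, (hψxx t x).deriv] at h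
    exact h
  constructor
  · -- smoothness
    intro p hp
    have hp1 : p.1 < 0 := hp
    have hns : (0 : ℝ) < -p.1 := by linarith
    have h4s : (0 : ℝ) < -4 * p.1 := by linarith
    apply ContDiffAt.contDiffWithinAt
    have hc1 : ContDiffAt ℝ (⊤ : ℕ∞) (fun q : ℝ × ℝ => ((((-4 * q.1) ^ (-1 / γ) : ℝ)) : ℂ)) p :=
      Complex.ofRealCLM.contDiff.contDiffAt.comp p
        ((Real.contDiffAt_rpow_const_of_ne (ne_of_gt h4s)).comp p
          (contDiff_const.mul contDiff_fst).contDiffAt)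
    have hcT : ContDiffAt ℝ (⊤ : ℕ∞) (fun q : ℝ × ℝ => -(1 / 4) * Real.log (-q.1)) p :=
      contDiffAt_const.mul
        ((Real.contDiffAt_log.mpr (ne_of_gt hns)).comp p contDiff_fst.neg.contDiffAt)
    have hcX : ContDiffAt ℝ (⊤ : ℕ∞) (fun q : ℝ × ℝ => q.2 / (2 * Real.sqrt (-q.1))) p := by
      refine contDiff_snd.contDiffAt.div
        (contDiffAt_const.mul
          ((Real.contDiffAt_sqrt (ne_of_gt hns)).comp p contDiff_fst.neg.contDiffAt)) ?_
      have := Real.sqrt_pos.mpr hns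
      positivity
    have hc2 : ContDiffAt ℝ (⊤ : ℕ∞)
        (fun q : ℝ × ℝ => ψ (-(1 / 4) * Real.log (-q.1)) (q.2 / (2 * Real.sqrt (-q.1)))) p :=
      hF.contDiffAt.comp p (hcT.prodMk hcX)
    have hc3 : ContDiffAt ℝ (⊤ : ℕ∞)
        (fun q : ℝ × ℝ => Complex.exp (Complex.I * ((q.2 ^ 2 / (8 * q.1) : ℝ) : ℂ))) p := by
      refine Complex.contDiff_exp.contDiffAt.comp p
        (contDiffAt_const.mul (Complex.ofRealCLM.contDiff.contDiffAt.comp p ?_))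
      exact (contDiff_snd.pow 2).contDiffAt.div
        (contDiff_const.mul contDiff_fst).contDiffAt (by simp [ne_of_lt hp1])
    exact (hc1.mul hc2).mul hc3
  · -- the equation
    rintro ⟨s, y⟩ hp
    have hp1 : s < 0 := hp
    have hs : s ≠ 0 := ne_of_lt hp1
    have hns : (0 : ℝ) < -s := by linarith
    have h4s : (0 : ℝ) < -4 * s := by linarith
    have hrpos : 0 < Real.sqrt (-s) := Real.sqrt_pos.mpr hns
    set r : ℝ := Real.sqrt (-s) with hrdef
    have hseq : s = -(r ^ 2) := by rw [hrdef, Real.sq_sqrt hns.le]; ring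
    have hrne : r ≠ 0 := ne_of_gt hrpos
    have hB : ((-4 * s) : ℝ) ^ (-1 / γ - 1) = (-4 * s) ^ (-1 / γ) * (-4 * s)⁻¹ := by
      rw [show (-1 / γ - 1 : ℝ) = -1 / γ + (-1) by ring, Real.rpow_add h4s,
        Real.rpow_neg_one]
    show Complex.I * deriv (fun t => (((-4 * t) ^ (-1 / γ) : ℝ) : ℂ) * ψ (-(1 / 4) * Real.log (-t)) (y / (2 * Real.sqrt (-t))) * Complex.exp (Complex.I * ((y ^ 2 / (8 * t) : ℝ) : ℂ))) s
        + deriv (deriv (fun x => (((-4 * s) ^ (-1 / γ) : ℝ) : ℂ) * ψ (-(1 / 4) * Real.log (-s)) (x / (2 * r)) * Complex.exp (Complex.I * ((x ^ 2 / (8 * s) : ℝ) : ℂ)))) y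
        + ((‖(((-4 * s) ^ (-1 / γ) : ℝ) : ℂ) * ψ (-(1 / 4) * Real.log (-s)) (y / (2 * r)) * Complex.exp (Complex.I * ((y ^ 2 / (8 * s) : ℝ) : ℂ))‖ ^ γ : ℝ) : ℂ) * ((((-4 * s) ^ (-1 / γ) : ℝ) : ℂ) * ψ (-(1 / 4) * Real.log (-s)) (y / (2 * r)) * Complex.exp (Complex.I * ((y ^ 2 / (8 * s) : ℝ) : ℂ)))
        + 0 * ((((-4 * s) ^ (-1 / γ) : ℝ) : ℂ) * ψ (-(1 / 4) * Real.log (-s)) (y / (2 * r)) * Complex.exp (Complex.I * ((y ^ 2 / (8 * s) : ℝ) : ℂ))) = 0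
    -- derivative in t
    have h1 : HasDerivAt (fun σ : ℝ => -4 * σ) (-4) s := by
      simpa using (hasDerivAt_id s).const_mul (-4 : ℝ)
    have hA := (Real.hasDerivAt_rpow_const (p := -1 / γ)
      (Or.inl (ne_of_gt h4s))).comp s h1
    have hAc := hA.ofReal_comp
    have hT := ((Real.hasDerivAt_log (ne_of_gt hns)).comp s
      (hasDerivAt_neg s)).const_mul (-(1 / 4) : ℝ)
    have hXden := ((Real.hasDerivAt_sqrt (ne_of_gt hns)).comp s
      (hasDerivAt_neg s)).const_mul (2 : ℝ)
    have hX := (hasDerivAt_const s y).div hXden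
      (mul_ne_zero two_ne_zero (Real.sqrt_ne_zero'.mpr hns))
    have hFc := hasDerivAt_comp_curve hFd hT hX
    have hEin := (hasDerivAt_const s (y ^ 2)).div
      ((hasDerivAt_id s).const_mul (8 : ℝ)) (mul_ne_zero (by norm_num) hs)
    have hE := (hEin.ofReal_comp.const_mul Complex.I).cexp
    have hφs : HasDerivAt (fun t : ℝ => (((-4 * t) ^ (-1 / γ) : ℝ) : ℂ) * ψ (-(1 / 4) * Real.log (-t)) (y / (2 * Real.sqrt (-t))) * Complex.exp (Complex.I * ((y ^ 2 / (8 * t) : ℝ) : ℂ)))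
        ((((-4 * s) ^ (-1 / γ) : ℝ) : ℂ) * (((-1 / (γ * s) : ℝ) : ℂ) * ψ (-(1 / 4) * Real.log (-s)) (y / (2 * r)) + ((-1 / (4 * s) : ℝ) : ℂ) * fderiv ℝ Fψ (-(1 / 4) * Real.log (-s), y / (2 * r)) (1, 0) + ((y / (4 * r ^ 3) : ℝ) : ℂ) * fderiv ℝ Fψ (-(1 / 4) * Real.log (-s), y / (2 * r)) (0, 1)) * Complex.exp (Complex.I * ((y ^ 2 / (8 * s) : ℝ) : ℂ)) + (((-4 * s) ^ (-1 / γ) : ℝ) : ℂ) * ψ (-(1 / 4) * Real.log (-s)) (y / (2 * r)) * Complex.exp (Complex.I * ((y ^ 2 / (8 * s) : ℝ) : ℂ)) * (Complex.I * ((-(y ^ 2) / (8 * s ^ 2) : ℝ) : ℂ))) s := by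
      refine HasDerivAt.congr_value ((hAc.mul hFc).mul hE) ?_
      simp only [Complex.real_smul, Function.comp, id_eq, hFψdef, hFxdef, Pi.mul_apply, Pi.div_apply]
      rw [← hrdef, hB, hseq]
      push_cast
      ring
    rw [hφs.deriv]
    -- first derivative in x
    have hder1 : ∀ z : ℝ, HasDerivAt (fun x : ℝ => (((-4 * s) ^ (-1 / γ) : ℝ) : ℂ) * ψ (-(1 / 4) * Real.log (-s)) (x / (2 * r)) * Complex.exp (Complex.I * ((x ^ 2 / (8 * s) : ℝ) : ℂ)))
        ((((-4 * s) ^ (-1 / γ) : ℝ) : ℂ) * (((1 / (2 * r) : ℝ) : ℂ) * fderiv ℝ Fψ (-(1 / 4) * Real.log (-s), z / (2 * r)) (0, 1)) * Complex.exp (Complex.I * ((z ^ 2 / (8 * s) : ℝ) : ℂ)) + (((-4 * s) ^ (-1 / γ) : ℝ) : ℂ) * ψ (-(1 / 4) * Real.log (-s)) (z / (2 * r)) * (Complex.exp (Complex.I * ((z ^ 2 / (8 * s) : ℝ) : ℂ)) * (Complex.I * ((z / (4 * s) : ℝ) : ℂ)))) z := by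
      intro z
      have k1 := hasDerivAt_comp_curve hFd (hasDerivAt_const z (-(1 / 4) * Real.log (-s)))
        ((hasDerivAt_id z).div_const (2 * r))
      have k2 := (((hasDerivAt_pow 2 z).div_const (8 * s)).ofReal_comp.const_mul
        Complex.I).cexp
      refine HasDerivAt.congr_value
        (((hasDerivAt_const z ((((-4 * s) ^ (-1 / γ) : ℝ) : ℂ))).mul k1).mul k2) ?_
      simp only [Complex.real_smul, zero_smul, zero_add, zero_mul, add_zero, pow_one, id_eq, hFψdef, hFxdef, Pi.mul_apply]
      push_cast
      ring
    rw [show deriv (fun x : ℝ => (((-4 * s) ^ (-1 / γ) : ℝ) : ℂ) * ψ (-(1 / 4) * Real.log (-s)) (x / (2 * r)) * Complex.exp (Complex.I * ((x ^ 2 / (8 * s) : ℝ) : ℂ))) = fun z : ℝ => (((-4 * s) ^ (-1 / γ) : ℝ) : ℂ) * (((1 / (2 * r) : ℝ) : ℂ) * fderiv ℝ Fψ (-(1 / 4) * Real.log (-s), z / (2 * r)) (0, 1)) * Complex.exp (Complex.I * ((z ^ 2 / (8 * s) : ℝ) : ℂ)) + (((-4 * s) ^ (-1 / γ) : ℝ)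 : ℂ) * ψ (-(1 / 4) * Real.log (-s)) (z / (2 * r)) * (Complex.exp (Complex.I * ((z ^ 2 / (8 * s) : ℝ) : ℂ)) * (Complex.I * ((z / (4 * s) : ℝ) : ℂ))) from
      funext fun z => (hder1 z).deriv]
    -- second derivative in x
    have hD2 : HasDerivAt (fun z : ℝ => (((-4 * s) ^ (-1 / γ) : ℝ) : ℂ) * (((1 / (2 * r) : ℝ) : ℂ) * fderiv ℝ Fψ (-(1 / 4) * Real.log (-s), z / (2 * r)) (0, 1)) * Complex.exp (Complex.I * ((z ^ 2 / (8 * s) : ℝ) : ℂ)) + (((-4 * s) ^ (-1 / γ) : ℝ) : ℂ) * ψ (-(1 / 4) * Real.log (-s)) (z / (2 * r)) * (Complex.exp (Complex.I * ((z ^ 2 / (8 * s) : ℝ) : ℂ)) * (Complex.I * ((z / (4 * s) : ℝ) : ℂ)))) ((((-4 * s) ^ (-1 / γ) : ℝ) : ℂ) * Complex.exp (Complex.I * ((y ^ 2 / (8 * s) : ℝ) : ℂ)) * (((1 / (4 * r ^ 2) : ℝ) : ℂ) * fderiv ℝ Fx (-(1 / 4) * Real.log (-s), y / (2 * r)) (0,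 1) + Complex.I * ((y / (4 * s * r) : ℝ) : ℂ) * fderiv ℝ Fψ (-(1 / 4) * Real.log (-s), y / (2 * r)) (0, 1) + (Complex.I * ((y / (4 * s) : ℝ) : ℂ)) * (Complex.I * ((y / (4 * s) : ℝ) : ℂ)) * ψ (-(1 / 4) * Real.log (-s)) (y / (2 * r)) + Complex.I * ((1 / (4 * s) : ℝ) : ℂ) * ψ (-(1 / 4) * Real.log (-s)) (y / (2 * r)))) y := by
      have k3 := hasDerivAt_comp_curve hFxd (hasDerivAt_const y (-(1 / 4) * Real.log (-s)))
        ((hasDerivAt_id y).div_const (2 * r))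
      have k1y := hasDerivAt_comp_curve hFd (hasDerivAt_const y (-(1 / 4) * Real.log (-s)))
        ((hasDerivAt_id y).div_const (2 * r))
      have k2y := (((hasDerivAt_pow 2 y).div_const (8 * s)).ofReal_comp.const_mul
        Complex.I).cexp
      have k4 := ((hasDerivAt_id y).div_const (4 * s)).ofReal_comp.const_mul Complex.I
      refine HasDerivAt.congr_value
        ((((hasDerivAt_const y ((((-4 * s) ^ (-1 / γ) : ℝ) : ℂ))).mul (k3.const_mul (((1 / (2 * r) : ℝ) : ℂ)))).mul k2y).add
          (((hasDerivAt_const y ((((-4 * s) ^ (-1 / γ) : ℝ) : ℂ))).mul k1y).mul (k2y.mul k4))) ?_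
      simp only [Complex.real_smul, zero_smul, zero_add, zero_mul, add_zero, pow_one, id_eq, hFψdef, hFxdef, Pi.mul_apply]
      push_cast
      ring
    rw [hD2.deriv]
    -- nonlinear term
    have habs : ‖(((-4 * s) ^ (-1 / γ) : ℝ) : ℂ) * ψ (-(1 / 4) * Real.log (-s)) (y / (2 * r)) * Complex.exp (Complex.I * ((y ^ 2 / (8 * s) : ℝ) : ℂ))‖ ^ γ
        = (-4 * s)⁻¹ * ‖ψ (-(1 / 4) * Real.log (-s)) (y / (2 * r))‖ ^ γ := by
      rw [norm_mul, norm_mul, Complex.norm_real, Real.norm_eq_abs,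
        abs_of_nonneg (Real.rpow_nonneg h4s.le _), Complex.norm_exp,
        show (Complex.I * ((y ^ 2 / (8 * s) : ℝ) : ℂ)).re = 0 by
          rw [Complex.mul_re, Complex.I_re, Complex.I_im, Complex.ofReal_re,
            Complex.ofReal_im]; ring,
        Real.exp_zero, mul_one,
        Real.mul_rpow (Real.rpow_nonneg h4s.le _) (norm_nonneg _),
        ← Real.rpow_mul h4s.le, show (-1 / γ * γ : ℝ) = -1 by field_simp,
        Real.rpow_neg_one]
    rw [habs]
    exact alg_key γ s r y _ _ _ _ _ _ _ hγ hrne hseq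
      (heq (-(1 / 4) * Real.log (-s)) (y / (2 * r)))
end

section
/- (The extra symmetry G(e^{2t}) of the harmonic oscillator potentials V = x² + i·ν.) Let γ ≠ 0 be a real constant, ν ∈ ℝ, and let ψ be a smooth solution of NLS(γ, V) on ℝ×ℝ, where V(t,x) = x² + i·ν. Then for every ε ∈ ℝ the function φ(t,x) = ψ( t, x + ε·e^{2t} ) · exp( −i·ε·e^{2t}·x − i·(ε²/2)·e^{4t} ) is a smooth solution of the same equation NLS(γ, V) on ℝ×ℝ. -/
open Complex Real in
private lemma hasDerivAt_comp2 {G : ℝ × ℝ → ℂ} (hG : ContDiff ℝ (⊤ : ℕ∞) G)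
    {c : ℝ → ℝ × ℝ} {v : ℝ × ℝ} {t : ℝ} (hc : HasDerivAt c v t) :
    HasDerivAt (fun s => G (c s)) (fderiv ℝ G (c t) v) t :=
  (hG.differentiable (by simp) (c t)).hasFDerivAt.comp_hasDerivAt t hc

/-- the extra symmetry `G(e^{2t})` of the potentials `V = x² + iν`. -/
theorem stmt_19 (γ : ℝ) (hγ : γ ≠ 0) (ν : ℝ) (ψ : ℝ → ℝ → ℂ)
    (hψ : SolvesNLS γ (fun _ x => ((x : ℂ)) ^ 2 + Complex.I * ((ν : ℝ) : ℂ)) ψ Set.univ)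
    (ε : ℝ) :
    SolvesNLS γ (fun _ x => ((x : ℂ)) ^ 2 + Complex.I * ((ν : ℝ) : ℂ))
      (fun t x => ψ t (x + ε * Real.exp (2 * t)) *
        Complex.exp (Complex.I *
          ((-(ε * Real.exp (2 * t) * x) - (ε ^ 2 / 2) * Real.exp (4 * t) : ℝ) : ℂ)))
      Set.univ := by
  obtain ⟨hsm, hpde⟩ := hψ
  have hF : ContDiff ℝ (⊤ : ℕ∞) (fun p : ℝ × ℝ => ψ p.1 p.2) := contDiffOn_univ.mp hsm
  set F : ℝ × ℝ → ℂ := fun p => ψ p.1 p.2 with hFdef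
  set D1 : ℝ × ℝ → ℂ := fun p => fderiv ℝ F p (1,0) with hD1def
  set D2 : ℝ × ℝ → ℂ := fun p => fderiv ℝ F p (0,1) with hD2def
  have hD2 : ContDiff ℝ (⊤ : ℕ∞) D2 := (hF.fderiv_right (by simp)).clm_apply contDiff_const
  set D22 : ℝ × ℝ → ℂ := fun p => fderiv ℝ D2 p (0,1) with hD22def
  have split : ∀ (q : ℝ × ℝ) (w : ℝ),
      fderiv ℝ F q (1, w) = D1 q + (w : ℂ) * D2 q := by
    intro q w
    have h : ((1 : ℝ), w) = (1, 0) + w • ((0 : ℝ), (1 : ℝ)) := by simp [Prod.ext_iff]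
    rw [hD1def, hD2def, h, map_add, map_smul, Complex.real_smul]
  have h_x : ∀ t y : ℝ, HasDerivAt (fun y => ψ t y) (D2 (t,y)) y := by
    intro t y
    exact hasDerivAt_comp2 hF ((hasDerivAt_const y t).prodMk (hasDerivAt_id y))
  have h_t : ∀ t x : ℝ, HasDerivAt (fun s => ψ s x) (D1 (t,x)) t := by
    intro t x
    exact hasDerivAt_comp2 hF ((hasDerivAt_id t).prodMk (hasDerivAt_const t x))
  have h_xx : ∀ t x : ℝ, deriv (deriv (fun y => ψ t y)) x = D22 (t, x) := by
    intro t x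
    have e1 : deriv (fun y => ψ t y) = fun y => D2 (t, y) := funext fun y => (h_x t y).deriv
    rw [e1]
    exact (hasDerivAt_comp2 hD2 ((hasDerivAt_const x t).prodMk (hasDerivAt_id x))).deriv
  have hPDE : ∀ t x : ℝ, Complex.I * D1 (t,x) + D22 (t,x)
      + ((‖ψ t x‖ ^ γ : ℝ) : ℂ) * ψ t x
      + (((x:ℂ))^2 + Complex.I * (ν:ℂ)) * ψ t x = 0 := by
    intro t x
    have h := hpde (t, x) (Set.mem_univ _)
    simp only at h
    rwa [(h_t t x).deriv, h_xx t x] at h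
  constructor
  · -- smoothness
    rw [contDiffOn_univ]
    have h1 : ContDiff ℝ (⊤ : ℕ∞) (fun p : ℝ × ℝ => ((p.1, p.2 + ε * Real.exp (2*p.1)) : ℝ × ℝ)) := by
      fun_prop
    have h2 : ContDiff ℝ (⊤ : ℕ∞) (fun p : ℝ × ℝ =>
        (-(ε * Real.exp (2 * p.1) * p.2) - (ε ^ 2 / 2) * Real.exp (4 * p.1))) := by
      fun_prop
    have h3 : ContDiff ℝ (⊤ : ℕ∞) (fun p : ℝ × ℝ => Complex.exp (Complex.I *
        ((-(ε * Real.exp (2 * p.1) * p.2) - (ε ^ 2 / 2) * Real.exp (4 * p.1) : ℝ) : ℂ))) :=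
      Complex.contDiff_exp.comp (contDiff_const.mul (Complex.ofRealCLM.contDiff.comp h2))
    exact (hF.comp h1).mul h3
  · rintro ⟨t, x⟩ -
    simp only
    have h4 : Real.exp (4 * t) = Real.exp (2 * t) * Real.exp (2 * t) := by
      rw [← Real.exp_add]; ring_nf
    -- time derivative pieces
    have ht1 : HasDerivAt (fun s : ℝ => ε * Real.exp (2 * s))
        (ε * (Real.exp (2 * t) * (2 * 1))) t :=
      (((hasDerivAt_id t).const_mul (2:ℝ)).exp).const_mul ε
    have ht4 : HasDerivAt (fun s : ℝ => Real.exp (4 * s)) (Real.exp (4 * t) * (4 * 1)) t :=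
      ((hasDerivAt_id t).const_mul (4:ℝ)).exp
    have hθt : HasDerivAt
        (fun s : ℝ => -(ε * Real.exp (2 * s) * x) - ε ^ 2 / 2 * Real.exp (4 * s))
        (-(ε * (Real.exp (2 * t) * (2 * 1)) * x) - ε ^ 2 / 2 * (Real.exp (4 * t) * (4 * 1))) t :=
      ((ht1.mul_const x).neg).sub (ht4.const_mul (ε ^ 2 / 2))
    have hEt : HasDerivAt (fun s : ℝ => Complex.exp (Complex.I *
          ((-(ε * Real.exp (2 * s) * x) - ε ^ 2 / 2 * Real.exp (4 * s) : ℝ) : ℂ)))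
        (Complex.exp (Complex.I *
          ((-(ε * Real.exp (2 * t) * x) - ε ^ 2 / 2 * Real.exp (4 * t) : ℝ) : ℂ))
         * (Complex.I * ((-(ε * (Real.exp (2 * t) * (2 * 1)) * x)
              - ε ^ 2 / 2 * (Real.exp (4 * t) * (4 * 1)) : ℝ) : ℂ))) t :=
      ((hθt.ofReal_comp).const_mul Complex.I).cexp
    have hcurve : HasDerivAt (fun s : ℝ => ((s, x + ε * Real.exp (2 * s)) : ℝ × ℝ))
        ((1, 0 + ε * (Real.exp (2 * t) * (2 * 1))) : ℝ × ℝ) t :=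
      (hasDerivAt_id t).prodMk ((hasDerivAt_const t x).add ht1)
    have hFt : HasDerivAt (fun s : ℝ => ψ s (x + ε * Real.exp (2 * s)))
        (D1 (t, x + ε * Real.exp (2 * t))
          + ((0 + ε * (Real.exp (2 * t) * (2 * 1)) : ℝ) : ℂ) * D2 (t, x + ε * Real.exp (2 * t))) t := by
      have h := hasDerivAt_comp2 hF hcurve
      rw [split] at h
      exact h
    have e1 : deriv (fun t_1 : ℝ => ψ t_1 (x + ε * Real.exp (2 * t_1)) * Complex.exp (Complex.I *
          ((-(ε * Real.exp (2 * t_1) * x) - ε ^ 2 / 2 * Real.exp (4 * t_1) : ℝ) : ℂ))) t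
        = (D1 (t, x + ε * Real.exp (2 * t))
            + ((0 + ε * (Real.exp (2 * t) * (2 * 1)) : ℝ) : ℂ) * D2 (t, x + ε * Real.exp (2 * t)))
          * Complex.exp (Complex.I *
            ((-(ε * Real.exp (2 * t) * x) - ε ^ 2 / 2 * Real.exp (4 * t) : ℝ) : ℂ))
        + ψ t (x + ε * Real.exp (2 * t)) *
          (Complex.exp (Complex.I *
            ((-(ε * Real.exp (2 * t) * x) - ε ^ 2 / 2 * Real.exp (4 * t) : ℝ) : ℂ))
           * (Complex.I * ((-(ε * (Real.exp (2 * t) * (2 * 1)) * x)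
                - ε ^ 2 / 2 * (Real.exp (4 * t) * (4 * 1)) : ℝ) : ℂ))) :=
      (hFt.mul hEt).deriv
    -- space derivative pieces
    have h_xs : ∀ y : ℝ, HasDerivAt (fun y => ψ t (y + ε * Real.exp (2 * t)))
        (D2 (t, y + ε * Real.exp (2 * t))) y := by
      intro y
      exact hasDerivAt_comp2 hF
        ((hasDerivAt_const y t).prodMk ((hasDerivAt_id y).add_const (ε * Real.exp (2 * t))))
    have hEy : ∀ y : ℝ, HasDerivAt (fun y : ℝ => Complex.exp (Complex.I *
          ((-(ε * Real.exp (2 * t) * y) - ε ^ 2 / 2 * Real.exp (4 * t) : ℝ) : ℂ)))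
        (Complex.exp (Complex.I *
          ((-(ε * Real.exp (2 * t) * y) - ε ^ 2 / 2 * Real.exp (4 * t) : ℝ) : ℂ))
         * (Complex.I * ((-(ε * Real.exp (2 * t) * 1) : ℝ) : ℂ))) y := by
      intro y
      have hlin : HasDerivAt
          (fun y : ℝ => -(ε * Real.exp (2 * t) * y) - ε ^ 2 / 2 * Real.exp (4 * t))
          (-(ε * Real.exp (2 * t) * 1)) y :=
        (((hasDerivAt_id y).const_mul (ε * Real.exp (2 * t))).neg).sub_const
          (ε ^ 2 / 2 * Real.exp (4 * t))
      exact ((hlin.ofReal_comp).const_mul Complex.I).cexp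
    have hprod : ∀ y : ℝ, HasDerivAt (fun x_1 : ℝ => ψ t (x_1 + ε * Real.exp (2 * t)) *
          Complex.exp (Complex.I *
            ((-(ε * Real.exp (2 * t) * x_1) - ε ^ 2 / 2 * Real.exp (4 * t) : ℝ) : ℂ)))
        (D2 (t, y + ε * Real.exp (2 * t)) * Complex.exp (Complex.I *
            ((-(ε * Real.exp (2 * t) * y) - ε ^ 2 / 2 * Real.exp (4 * t) : ℝ) : ℂ))
         + ψ t (y + ε * Real.exp (2 * t)) * (Complex.exp (Complex.I *
            ((-(ε * Real.exp (2 * t) * y) - ε ^ 2 / 2 * Real.exp (4 * t) : ℝ) : ℂ))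
           * (Complex.I * ((-(ε * Real.exp (2 * t) * 1) : ℝ) : ℂ)))) y :=
      fun y => (h_xs y).mul (hEy y)
    have e2 : deriv (fun x_1 : ℝ => ψ t (x_1 + ε * Real.exp (2 * t)) *
          Complex.exp (Complex.I *
            ((-(ε * Real.exp (2 * t) * x_1) - ε ^ 2 / 2 * Real.exp (4 * t) : ℝ) : ℂ)))
        = fun y => D2 (t, y + ε * Real.exp (2 * t)) * Complex.exp (Complex.I *
            ((-(ε * Real.exp (2 * t) * y) - ε ^ 2 / 2 * Real.exp (4 * t) : ℝ) : ℂ))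
         + ψ t (y + ε * Real.exp (2 * t)) * (Complex.exp (Complex.I *
            ((-(ε * Real.exp (2 * t) * y) - ε ^ 2 / 2 * Real.exp (4 * t) : ℝ) : ℂ))
           * (Complex.I * ((-(ε * Real.exp (2 * t) * 1) : ℝ) : ℂ))) :=
      funext fun y => (hprod y).deriv
    have hD2y : HasDerivAt (fun y => D2 (t, y + ε * Real.exp (2 * t)))
        (D22 (t, x + ε * Real.exp (2 * t))) x :=
      hasDerivAt_comp2 hD2
        ((hasDerivAt_const x t).prodMk ((hasDerivAt_id x).add_const (ε * Real.exp (2 * t))))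
    have e3 : deriv (fun y => D2 (t, y + ε * Real.exp (2 * t)) * Complex.exp (Complex.I *
            ((-(ε * Real.exp (2 * t) * y) - ε ^ 2 / 2 * Real.exp (4 * t) : ℝ) : ℂ))
         + ψ t (y + ε * Real.exp (2 * t)) * (Complex.exp (Complex.I *
            ((-(ε * Real.exp (2 * t) * y) - ε ^ 2 / 2 * Real.exp (4 * t) : ℝ) : ℂ))
           * (Complex.I * ((-(ε * Real.exp (2 * t) * 1) : ℝ) : ℂ)))) x
        = (D22 (t, x + ε * Real.exp (2 * t)) * Complex.exp (Complex.I *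
            ((-(ε * Real.exp (2 * t) * x) - ε ^ 2 / 2 * Real.exp (4 * t) : ℝ) : ℂ))
           + D2 (t, x + ε * Real.exp (2 * t)) * (Complex.exp (Complex.I *
            ((-(ε * Real.exp (2 * t) * x) - ε ^ 2 / 2 * Real.exp (4 * t) : ℝ) : ℂ))
             * (Complex.I * ((-(ε * Real.exp (2 * t) * 1) : ℝ) : ℂ))))
          + (D2 (t, x + ε * Real.exp (2 * t)) * (Complex.exp (Complex.I *
            ((-(ε * Real.exp (2 * t) * x) - ε ^ 2 / 2 * Real.exp (4 * t) : ℝ) : ℂ))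
             * (Complex.I * ((-(ε * Real.exp (2 * t) * 1) : ℝ) : ℂ)))
            + ψ t (x + ε * Real.exp (2 * t)) * ((Complex.exp (Complex.I *
            ((-(ε * Real.exp (2 * t) * x) - ε ^ 2 / 2 * Real.exp (4 * t) : ℝ) : ℂ))
             * (Complex.I * ((-(ε * Real.exp (2 * t) * 1) : ℝ) : ℂ)))
              * (Complex.I * ((-(ε * Real.exp (2 * t) * 1) : ℝ) : ℂ)))) :=
      ((hD2y.mul (hEy x)).add ((h_xs x).mul ((hEy x).mul_const
        (Complex.I * ((-(ε * Real.exp (2 * t) * 1) : ℝ) : ℂ))))).deriv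
    have habs : ‖ψ t (x + ε * Real.exp (2 * t)) * Complex.exp (Complex.I *
          ((-(ε * Real.exp (2 * t) * x) - ε ^ 2 / 2 * Real.exp (4 * t) : ℝ) : ℂ))‖
        = ‖ψ t (x + ε * Real.exp (2 * t))‖ := by
      rw [norm_mul, mul_comm Complex.I, Complex.norm_exp_ofReal_mul_I, mul_one]
    rw [e1, e2, e3, habs]
    have hP := hPDE t (x + ε * Real.exp (2 * t))
    rw [h4]
    set X : ℂ := Complex.exp (Complex.I * ((-(ε * Real.exp (2 * t) * x)
      - ε ^ 2 / 2 * (Real.exp (2 * t) * Real.exp (2 * t)) : ℝ) : ℂ)) with hX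
    set r : ℝ := Real.exp (2 * t) with hr
    push_cast at hP ⊢
    linear_combination X * hP - ((ε:ℂ) * (r:ℂ) * X * ψ t (x + ε * r) * (x:ℂ) * 2
      + (ε:ℂ) ^ 2 * (r:ℂ) ^ 2 * X * ψ t (x + ε * r)) * Complex.I_sq
end
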